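/- Let G be a connected graph and v a vertex of G. The quotient map from the walk group 𝔚ᵥ(G) (prune classes of closed walks at v under concatenation) onto the fundamental group Π₁(G, v) (≡-classes of closed walks at v) is a surjective group homomorphism whose kernel is the normal subgroup D generated by the prune classes of all walks of the form γ * (v₁ v₂ v₃ v₄ v₁) * γ⁻¹, where (v₁ v₂ v₃ v₄ v₁) is a closed walk of length 4 (a diamond) and γ is any walk from v to v₁. Hence Π₁(G, v) ≅ 𝔚ᵥ(G)/D. -/

import Mathlib

/-!
Both groups consist of classes of the same closed walks at `v`, so the claim is that
`α ≡ β` exactly when `α * β⁻¹` is prune equivalent to a product of conjugated diamonds.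

A diamond `(u a b c u)` is null-homotopic: one spider move turns it into `(u a u c u)`, which
prunes away. As `≡` is compatible with concatenation, every element of `D` is null-homotopic,
so `α * β⁻¹ ∈ D` gives `α ≡ α * β⁻¹ * β ≡ β`.

Conversely, "`α * β⁻¹` lies in `D` up to pruning" is an equivalence relation on closed walks
at `v` (as `D` is closed under products and `μ⁻¹ * μ` prunes away) that contains prune
equivalence. A spider move replacing `x` by `y` between `a` and `b` multiplies the walk by the
conjugated diamond `γ (a x b y a) γ⁻¹`, where `γ` is the part of the walk up to `a`.
-/

/-- A graph: vertex type `V` with a symmetric adjacency relation (loops allowed). -/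
structure WalkGraph (V : Type) where
  Adj : V → V → Prop
  symm : Symmetric Adj

variable {V W X : Type}

/-- `l` is the (nonempty) vertex sequence of a walk in `G`. -/
def IsWalk (G : WalkGraph V) (l : List V) : Prop :=
  l ≠ [] ∧ l.Chain' G.Adj

/-- `l` is a walk in `G` from `x` to `y`. -/
def IsWalkFrom (G : WalkGraph V) (x y : V) (l : List V) : Prop :=
  l.Chain' G.Adj ∧ l.head? = some x ∧ l.getLast? = some y

/-- Concatenation of walks sharing an endpoint: follow `l`, then `m`. -/
def wconcat (l m : List V) : List V := l ++ m.tail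

/-- A walk is prunable if some vertex `vᵢ` satisfies `vᵢ = vᵢ₊₂`. -/
def Prunable (l : List V) : Prop :=
  ∃ (p s : List V) (a b : V), l = p ++ a :: b :: a :: s

/-- `m` is obtained from `l` by a single prune (deleting `vᵢ, vᵢ₊₁` when `vᵢ = vᵢ₊₂`). -/
def PruneOf (l m : List V) : Prop :=
  ∃ (p s : List V) (a b : V), l = p ++ a :: b :: a :: s ∧ m = p ++ a :: s

/-- A single prune step (in either direction) between walks of `G`. -/
def PruneStep (G : WalkGraph V) (l m : List V) : Prop :=
  IsWalk G l ∧ IsWalk G m ∧ (PruneOf l m ∨ PruneOf m l)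

/-- Prune equivalence: the equivalence relation on walks of `G` generated by prunes. -/
def PruneEqv (G : WalkGraph V) : List V → List V → Prop :=
  Relation.EqvGen (PruneStep G)

/-- A spider move: two walks of `G` of the same length which agree at every index
except (at most) a single interior index. -/
def SpiderStep (G : WalkGraph V) (l m : List V) : Prop :=
  IsWalk G l ∧ IsWalk G m ∧ l.length = m.length ∧
    ∃ i : ℕ, 0 < i ∧ i + 1 < l.length ∧ ∀ j : ℕ, j ≠ i → l[j]? = m[j]?

/-- Homotopy rel endpoints (`≡`): the equivalence relation on walks of `G`
generated by prunes and spider moves. -/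
def HomEqv (G : WalkGraph V) : List V → List V → Prop :=
  Relation.EqvGen (fun l m => PruneStep G l m ∨ SpiderStep G l m)

/-- A graph morphism. -/
def IsHom (G : WalkGraph V) (H : WalkGraph W) (f : V → W) : Prop :=
  ∀ {u v : V}, G.Adj u v → H.Adj (f u) (f v)

/-- One step of a ×-homotopy between graph morphisms. -/
def HtpyStep (G : WalkGraph V) (H : WalkGraph W) (f g : V → W) : Prop :=
  IsHom G H f ∧ IsHom G H g ∧ ∀ u v, G.Adj u v → H.Adj (f u) (g v)

/-- ×-homotopy of graph morphisms. -/
def Homotopic (G : WalkGraph V) (H : WalkGraph W) : (V → W) → (V → W) → Prop :=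
  Relation.ReflTransGen (HtpyStep G H)

/-- Walks representing elements of the subgroup `D` of the walk group at `v`: finite
products of conjugated diamonds `γ * (v₁ v₂ v₃ v₄ v₁) * γ⁻¹` (a diamond is a closed
walk of length 4, i.e. a list of 5 vertices). -/
inductive InDiamondSubgroup (G : WalkGraph V) (v : V) : List V → Prop
  | nil : InDiamondSubgroup G v [v]
  | cons (γ d δ : List V) (u : V) :
      IsWalkFrom G v u γ → IsWalkFrom G u u d → d.length = 5 →
      InDiamondSubgroup G v δ →
      InDiamondSubgroup G v (wconcat (wconcat (wconcat γ d) γ.reverse) δ)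


namespace Relation.EqvGen

variable {α β : Type*} {r : α → α → Prop} {P : α → Prop}

theorem induction_of_invariant {R : α → α → Prop} (hP : ∀ a b, r a b → (P a ↔ P b))
    (hr : ∀ a b, r a b → P a → R a b) (hrefl : ∀ a, P a → R a a)
    (hsymm : ∀ a b, P a → P b → R a b → R b a)
    (htrans : ∀ a b c, P a → P b → P c → R a b → R b c → R a c) {a b : α}
    (h : EqvGen r a b) : P a → R a b := by
  suffices (P a ↔ P b) ∧ (P a → R a b) from this.2
  induction h with
  | rel a b h => exact ⟨hP a b h, hr a b h⟩
  | refl a => exact ⟨Iff.rfl, hrefl a⟩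
  | symm a b _ ih =>
    exact ⟨ih.1.symm, fun hb => hsymm a b (ih.1.2 hb) hb (ih.2 (ih.1.2 hb))⟩
  | trans a b c _ _ ih₁ ih₂ =>
    refine ⟨ih₁.1.trans ih₂.1, fun ha => ?_⟩
    have hb := ih₁.1.1 ha
    exact htrans a b c ha hb (ih₂.1.1 hb) (ih₁.2 ha) (ih₂.2 hb)

theorem map_of_invariant {s : β → β → Prop} (f : α → β) (hP : ∀ a b, r a b → (P a ↔ P b))
    (hf : ∀ a b, r a b → P a → s (f a) (f b)) {a b : α} (h : EqvGen r a b) :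
    P a → EqvGen s (f a) (f b) :=
  h.induction_of_invariant (R := fun a b => EqvGen s (f a) (f b)) hP
    (fun a b hab ha => .rel _ _ (hf a b hab ha))
    (fun _ _ => .refl _) (fun _ _ _ _ => .symm _ _) (fun _ _ _ _ _ _ => .trans _ _ _)

end Relation.EqvGen

theorem List.exists_eq_append_cons_of_getElem?_eq {α : Type*} {l m : List α} {i : ℕ}
    (hlen : l.length = m.length) (hi : i < l.length) (h : ∀ j, j ≠ i → l[j]? = m[j]?) :
    ∃ p s x y, p.length = i ∧ l = p ++ x :: s ∧ m = p ++ y :: s := by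
  refine ⟨l.take i, l.drop (i + 1), l[i], m[i], by simp; omega, by simp, ?_⟩
  apply List.ext_getElem?
  intro j
  have hpi : (l.take i).length = i := by simp; omega
  rcases lt_trichotomy j i with hj | rfl | hj
  · rw [List.getElem?_append_left (by omega), List.getElem?_take_of_lt hj, h j hj.ne]
  · simp [hpi]
  · obtain ⟨k, rfl⟩ := Nat.exists_eq_add_of_lt hj
    rw [← h _ hj.ne', List.getElem?_append_right (by omega), hpi,
      show i + k + 1 - i = k + 1 by omega]
    simp [add_right_comm i k 1]

theorem List.tail_append_cons {α : Type*} (l : List α) (a : α) (r : List α) :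
    (l ++ a :: r).tail = (l ++ [a]).tail ++ r := by
  cases l <;> simp

section Walks

variable {G : WalkGraph V} {x y : V} {l m n : List V}

theorem isWalk_iff : IsWalk G l ↔ l ≠ [] ∧ l.IsChain G.Adj := Iff.rfl

theorem isWalkFrom_iff :
    IsWalkFrom G x y l ↔ IsWalk G l ∧ l.head? = some x ∧ l.getLast? = some y :=
  ⟨fun h => ⟨⟨by rintro rfl; exact absurd h.2.1 (by simp), h.1⟩, h.2⟩, fun h => ⟨h.1.2, h.2⟩⟩

theorem IsWalkFrom.isWalk (h : IsWalkFrom G x y l) : IsWalk G l := (isWalkFrom_iff.1 h).1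

theorem IsWalkFrom.head?_eq (h : IsWalkFrom G x y l) : l.head? = some x := h.2.1

theorem IsWalkFrom.getLast?_eq (h : IsWalkFrom G x y l) : l.getLast? = some y := h.2.2

theorem IsWalkFrom.getLast?_eq_head? {z : V} (hl : IsWalkFrom G x y l) (hm : IsWalkFrom G y z m) :
    l.getLast? = m.head? :=
  hl.getLast?_eq.trans hm.head?_eq.symm

theorem IsWalk.reverse (h : IsWalk G l) : IsWalk G l.reverse :=
  ⟨by simpa using h.1, List.isChain_reverse.2 (h.2.imp fun _ _ hab => G.symm hab)⟩

theorem IsWalkFrom.reverse (h : IsWalkFrom G x y l) : IsWalkFrom G y x l.reverse := by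
  obtain ⟨hw, hx, hy⟩ := isWalkFrom_iff.1 h
  exact isWalkFrom_iff.2 ⟨hw.reverse, by simpa using hy, by simpa using hx⟩

@[simp] theorem wconcat_singleton (l : List V) (a : V) : wconcat l [a] = l := by
  simp [wconcat]

theorem singleton_wconcat {a : V} (h : l.head? = some a) : wconcat [a] l = l := by
  cases l <;> simp_all [wconcat]

theorem wconcat_assoc (l : List V) (hm : m ≠ []) (n : List V) :
    wconcat (wconcat l m) n = wconcat l (wconcat m n) := by
  cases m <;> simp_all [wconcat]

theorem wconcat_eq_dropLast_append (h : l.getLast? = m.head?) :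
    wconcat l m = l.dropLast ++ m := by
  rcases m with _ | ⟨c, t⟩
  · simp_all [wconcat]
  · have hl : l ≠ [] := by rintro rfl; simp at h
    rw [List.getLast?_eq_some_getLast hl, List.head?_cons, Option.some_inj] at h
    conv_lhs => rw [wconcat, ← List.dropLast_append_getLast hl, h]
    simp

theorem head?_wconcat (hl : l ≠ []) (m : List V) : (wconcat l m).head? = l.head? := by
  cases l <;> simp_all [wconcat]

theorem getLast?_wconcat (h : l.getLast? = m.head?) : (wconcat l m).getLast? = m.getLast? := by
  rcases m with _ | ⟨c, t⟩
  · simp_all [wconcat]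
  · rw [wconcat_eq_dropLast_append h, List.getLast?_append,
      List.getLast?_eq_some_getLast (List.cons_ne_nil c t), Option.some_or]

theorem IsWalk.wconcat (hl : IsWalk G l) (hm : IsWalk G m) (h : l.getLast? = m.head?) :
    IsWalk G (wconcat l m) := by
  obtain ⟨c, t, rfl⟩ := List.exists_cons_of_ne_nil hm.1
  refine ⟨by simp [_root_.wconcat, hl.1], List.isChain_append.2 ⟨hl.2, hm.2.tail, ?_⟩⟩
  rintro a ha b hb
  cases t with
  | nil => simp at hb
  | cons d t =>
    rw [h] at ha
    simp only [List.head?_cons, List.tail_cons, Option.mem_def, Option.some_inj] at ha hb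
    exact ha ▸ hb ▸ (List.isChain_cons_cons.1 hm.2).1

theorem IsWalkFrom.wconcat {z : V} (hl : IsWalkFrom G x y l) (hm : IsWalkFrom G y z m) :
    IsWalkFrom G x z (wconcat l m) := by
  obtain ⟨hlw, hlx, hly⟩ := isWalkFrom_iff.1 hl
  obtain ⟨hmw, hmy, hmz⟩ := isWalkFrom_iff.1 hm
  have h : l.getLast? = m.head? := hly.trans hmy.symm
  exact isWalkFrom_iff.2 ⟨hlw.wconcat hmw h, by rw [head?_wconcat hlw.1, hlx],
    by rw [getLast?_wconcat h, hmz]⟩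

end Walks

section Prune

variable {G : WalkGraph V} {l m n : List V} {a : V}

theorem PruneOf.head?_eq (h : PruneOf l m) : l.head? = m.head? := by
  obtain ⟨p, s, a, b, rfl, rfl⟩ := h
  cases p <;> simp

theorem PruneOf.getLast?_eq (h : PruneOf l m) : l.getLast? = m.getLast? := by
  obtain ⟨p, s, a, b, rfl, rfl⟩ := h
  cases s <;> simp [List.getLast?_cons]

theorem PruneOf.isWalk (hl : IsWalk G l) (h : PruneOf l m) : IsWalk G m := by
  obtain ⟨p, s, a, b, rfl, rfl⟩ := h
  obtain ⟨hp, hs, hps⟩ := List.isChain_append.1 hl.2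
  exact ⟨by simp, List.isChain_append.2 ⟨hp, hs.tail.tail, by simpa using hps⟩⟩

theorem PruneOf.append_left (p : List V) (h : PruneOf l m) : PruneOf (p ++ l) (p ++ m) := by
  obtain ⟨q, s, a, b, rfl, rfl⟩ := h
  exact ⟨p ++ q, s, a, b, by simp, by simp⟩

theorem PruneOf.append_right (h : PruneOf l m) (s : List V) : PruneOf (l ++ s) (m ++ s) := by
  obtain ⟨q, t, a, b, rfl, rfl⟩ := h
  exact ⟨q, t ++ s, a, b, by simp, by simp⟩

theorem PruneStep.head?_eq (h : PruneStep G l m) : l.head? = m.head? :=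
  h.2.2.elim PruneOf.head?_eq fun h => h.head?_eq.symm

theorem PruneStep.getLast?_eq (h : PruneStep G l m) : l.getLast? = m.getLast? :=
  h.2.2.elim PruneOf.getLast?_eq fun h => h.getLast?_eq.symm

theorem PruneStep.wconcat_right (h : PruneStep G l m) (hn : IsWalk G n)
    (he : l.getLast? = n.head?) : PruneStep G (wconcat l n) (wconcat m n) :=
  ⟨h.1.wconcat hn he, h.2.1.wconcat hn (h.getLast?_eq ▸ he),
    h.2.2.imp (·.append_right _) (·.append_right _)⟩

theorem PruneStep.wconcat_left (h : PruneStep G l m) (hn : IsWalk G n)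
    (he : n.getLast? = l.head?) : PruneStep G (wconcat n l) (wconcat n m) := by
  have he' : n.getLast? = m.head? := he.trans h.head?_eq
  refine ⟨hn.wconcat h.1 he, hn.wconcat h.2.1 he', ?_⟩
  rw [wconcat_eq_dropLast_append he, wconcat_eq_dropLast_append he']
  exact h.2.2.imp (·.append_left _) (·.append_left _)

theorem PruneEqv.wconcat_right (h : PruneEqv G l m) (hn : IsWalk G n)
    (he : l.getLast? = n.head?) : PruneEqv G (wconcat l n) (wconcat m n) :=
  h.map_of_invariant (P := (·.getLast? = n.head?)) (wconcat · n)
    (fun _ _ hs => by rw [hs.getLast?_eq]) (fun _ _ hs he => hs.wconcat_right hn he) he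

theorem PruneEqv.wconcat_left (h : PruneEqv G l m) (hn : IsWalk G n)
    (he : n.getLast? = l.head?) : PruneEqv G (wconcat n l) (wconcat n m) :=
  h.map_of_invariant (P := (n.getLast? = ·.head?)) (wconcat n ·)
    (fun _ _ hs => by rw [hs.head?_eq]) (fun _ _ hs he => hs.wconcat_left hn he) he

theorem PruneEqv.of_reflTransGen (hl : IsWalk G l) (h : Relation.ReflTransGen PruneOf l m) :
    PruneEqv G l m := by
  induction h using Relation.ReflTransGen.head_induction_on with
  | refl => exact .refl _
  | head hstep _ ih =>
    exact .trans _ _ _ (.rel _ _ ⟨hl, hstep.isWalk hl, .inl hstep⟩) (ih (hstep.isWalk hl))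

theorem reflTransGen_pruneOf_wconcat_reverse (p q : List V) (hl : l.head? = some a) :
    Relation.ReflTransGen PruneOf (p ++ wconcat l l.reverse ++ q) (p ++ a :: q) := by
  induction l generalizing p q a with
  | nil => simp at hl
  | cons x t ih =>
    obtain rfl : x = a := by simpa using hl
    rcases t with _ | ⟨b, t⟩
    · simpa [wconcat] using .refl
    · have e : p ++ wconcat (x :: b :: t) (x :: b :: t).reverse ++ q =
          (p ++ [x]) ++ wconcat (b :: t) (b :: t).reverse ++ x :: q := by
        have : (x :: b :: t).reverse = ((b :: t).reverse) ++ [x] := List.reverse_cons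
        rw [wconcat, wconcat, this, List.tail_append_of_ne_nil (by simp)]
        simp
      rw [e]
      exact (ih (p ++ [x]) (x :: q) rfl).tail ⟨p, q, x, b, by simp, rfl⟩

theorem pruneEqv_wconcat_reverse (hl : IsWalk G l) (ha : l.head? = some a) :
    PruneEqv G (wconcat l l.reverse) [a] := by
  refine PruneEqv.of_reflTransGen (hl.wconcat hl.reverse (by simp)) ?_
  simpa using reflTransGen_pruneOf_wconcat_reverse [] [] ha

theorem pruneEqv_wconcat_cancel (hl : IsWalk G l) (hn : IsWalk G n) (hm : IsWalk G m)
    (hln : l.getLast? = n.getLast?) (hnm : n.getLast? = m.head?) :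
    PruneEqv G (wconcat (wconcat l n.reverse) (wconcat n m)) (wconcat l m) := by
  have hx : n.getLast? = some (n.getLast hn.1) := List.getLast?_eq_some_getLast hn.1
  have hln' : l.getLast? = n.reverse.head? := by rwa [List.head?_reverse]
  have hwalk : IsWalk G (wconcat (wconcat l n.reverse) (wconcat n m)) :=
    (hl.wconcat hn.reverse hln').wconcat (hn.wconcat hm hnm) (by
      rw [getLast?_wconcat hln', head?_wconcat hn.1, List.getLast?_reverse])
  have e₁ : wconcat (wconcat l n.reverse) (wconcat n m) =
      l.dropLast ++ wconcat n.reverse n.reverse.reverse ++ m.tail := by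
    rw [wconcat_eq_dropLast_append hln', List.reverse_reverse]
    simp [wconcat, hn.1]
  have e₂ : wconcat l m = l.dropLast ++ n.getLast hn.1 :: m.tail := by
    conv_lhs => rw [wconcat, ← List.dropLast_append_getLast? _ (hln.trans hx)]
    simp
  rw [e₂]
  refine .of_reflTransGen hwalk ?_
  rw [e₁]
  exact reflTransGen_pruneOf_wconcat_reverse _ _ (by rw [List.head?_reverse, hx])

end Prune

section Homotopy

variable {G : WalkGraph V} {x y : V} {l m n : List V}

theorem SpiderStep.head?_eq (h : SpiderStep G l m) : l.head? = m.head? := by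
  obtain ⟨-, -, -, i, hi0, -, hag⟩ := h
  simpa only [List.head?_eq_getElem?] using hag 0 hi0.ne

theorem SpiderStep.getLast?_eq (h : SpiderStep G l m) : l.getLast? = m.getLast? := by
  obtain ⟨-, -, hlen, i, -, hi, hag⟩ := h
  rw [List.getLast?_eq_getElem?, List.getLast?_eq_getElem?, ← hlen]
  exact hag _ (by omega)

theorem SpiderStep.symm (h : SpiderStep G l m) : SpiderStep G m l := by
  obtain ⟨hl, hm, hlen, i, hi0, hi, hag⟩ := h
  exact ⟨hm, hl, hlen.symm, i, hi0, hlen ▸ hi, fun j hj => (hag j hj).symm⟩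

theorem SpiderStep.wconcat_right (h : SpiderStep G l m) (hn : IsWalk G n)
    (he : l.getLast? = n.head?) : SpiderStep G (wconcat l n) (wconcat m n) := by
  have he' : m.getLast? = n.head? := h.getLast?_eq ▸ he
  obtain ⟨hl, hm, hlen, i, hi0, hi, hag⟩ := h
  refine ⟨hl.wconcat hn he, hm.wconcat hn he', by simp [wconcat, hlen], i, hi0,
    by simp [wconcat]; omega, fun j hj => ?_⟩
  rcases lt_or_ge j l.length with hj' | hj'
  · rw [wconcat, wconcat, List.getElem?_append_left hj', List.getElem?_append_left (hlen ▸ hj'),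
      hag j hj]
  · rw [wconcat, wconcat, List.getElem?_append_right hj', List.getElem?_append_right (hlen ▸ hj'),
      hlen]

theorem SpiderStep.wconcat_left (h : SpiderStep G l m) (hn : IsWalk G n)
    (he : n.getLast? = l.head?) : SpiderStep G (wconcat n l) (wconcat n m) := by
  have he' : n.getLast? = m.head? := he.trans h.head?_eq
  obtain ⟨hl, hm, hlen, i, hi0, hi, hag⟩ := h
  refine ⟨hn.wconcat hl he, hn.wconcat hm he', ?_⟩
  rw [wconcat_eq_dropLast_append he, wconcat_eq_dropLast_append he']
  refine ⟨by simp [hlen], n.dropLast.length + i, by omega, by simp; omega, fun j hj => ?_⟩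
  rcases lt_or_ge j n.dropLast.length with hj' | hj'
  · rw [List.getElem?_append_left hj', List.getElem?_append_left hj']
  · rw [List.getElem?_append_right hj', List.getElem?_append_right hj']
    exact hag _ (by omega)

def HomStep (G : WalkGraph V) (l m : List V) : Prop :=
  PruneStep G l m ∨ SpiderStep G l m

theorem HomStep.isWalk (h : HomStep G l m) : IsWalk G l ∧ IsWalk G m :=
  h.elim (fun h => ⟨h.1, h.2.1⟩) fun h => ⟨h.1, h.2.1⟩

theorem HomStep.head?_eq (h : HomStep G l m) : l.head? = m.head? :=
  h.elim PruneStep.head?_eq SpiderStep.head?_eq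

theorem HomStep.getLast?_eq (h : HomStep G l m) : l.getLast? = m.getLast? :=
  h.elim PruneStep.getLast?_eq SpiderStep.getLast?_eq

theorem HomStep.isWalkFrom_iff (h : HomStep G l m) :
    IsWalkFrom G x y l ↔ IsWalkFrom G x y m := by
  rw [_root_.isWalkFrom_iff, _root_.isWalkFrom_iff, h.head?_eq, h.getLast?_eq]
  exact ⟨fun h' => ⟨h.isWalk.2, h'.2⟩, fun h' => ⟨h.isWalk.1, h'.2⟩⟩

theorem HomEqv.wconcat_right (h : HomEqv G l m) (hn : IsWalk G n)
    (he : l.getLast? = n.head?) : HomEqv G (wconcat l n) (wconcat m n) :=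
  h.map_of_invariant (r := HomStep G) (P := (·.getLast? = n.head?)) (wconcat · n)
    (fun _ _ hs => by rw [hs.getLast?_eq])
    (fun _ _ hs he => hs.imp (·.wconcat_right hn he) (·.wconcat_right hn he)) he

theorem HomEqv.wconcat_left (h : HomEqv G l m) (hn : IsWalk G n)
    (he : n.getLast? = l.head?) : HomEqv G (wconcat n l) (wconcat n m) :=
  h.map_of_invariant (r := HomStep G) (P := (n.getLast? = ·.head?)) (wconcat n ·)
    (fun _ _ hs => by rw [hs.head?_eq])
    (fun _ _ hs he => hs.imp (·.wconcat_left hn he) (·.wconcat_left hn he)) he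

theorem PruneEqv.homEqv (h : PruneEqv G l m) : HomEqv G l m :=
  h.mono fun _ _ => Or.inl

end Homotopy

section Diamonds

variable {G : WalkGraph V} {u v : V} {d δ δ' : List V}

theorem InDiamondSubgroup.isWalkFrom (h : InDiamondSubgroup G v δ) : IsWalkFrom G v v δ := by
  induction h with
  | nil => exact ⟨List.isChain_singleton v, rfl, rfl⟩
  | cons γ d δ u hγ hd _ _ ih => exact ((hγ.wconcat hd).wconcat hγ.reverse).wconcat ih

theorem InDiamondSubgroup.mul (h : InDiamondSubgroup G v δ)
    (h' : InDiamondSubgroup G v δ') : InDiamondSubgroup G v (wconcat δ δ') := by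
  induction h with
  | nil => rwa [singleton_wconcat h'.isWalkFrom.head?_eq]
  | cons γ d δ u hγ hd hd5 hδ ih =>
    rw [wconcat_assoc _ hδ.isWalkFrom.isWalk.1]
    exact .cons γ d _ u hγ hd hd5 ih

theorem homEqv_diamond (hd : IsWalkFrom G u u d) (h5 : d.length = 5) : HomEqv G d [u] := by
  obtain ⟨a, b, c, rfl⟩ : ∃ a b c, d = [u, a, b, c, u] := by
    match d, hd, h5 with
    | [_, a, b, c, _], ⟨_, h₁, h₂⟩, _ =>
      simp only [List.head?_cons, List.getLast?_cons_cons, List.getLast?_singleton,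
        Option.some_inj] at h₁ h₂
      exact ⟨a, b, c, by rw [h₁, h₂]⟩
  have hw := hd.isWalk
  obtain ⟨hua, -, -, hcu⟩ : G.Adj u a ∧ G.Adj a b ∧ G.Adj b c ∧ G.Adj c u := by
    simpa [isWalk_iff] using hw
  have hback : IsWalk G [u, a, u, c, u] :=
    isWalk_iff.2 ⟨List.cons_ne_nil _ _, by simp [hua, G.symm hua, G.symm hcu, hcu]⟩
  -- moving the far corner `b` onto `u` turns the diamond into two backtracks
  have hspider : SpiderStep G [u, a, b, c, u] [u, a, u, c, u] :=
    ⟨hw, hback, rfl, 2, by omega, by simp, fun j hj => by rcases j with _ | _ | _ | j <;> simp_all⟩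
  refine .trans _ _ _ (.rel _ _ (.inr hspider)) (PruneEqv.homEqv (.of_reflTransGen hback ?_))
  exact .head ⟨[], [c, u], u, a, rfl, rfl⟩ (.single ⟨[], [], u, c, rfl, rfl⟩)

theorem InDiamondSubgroup.homEqv (h : InDiamondSubgroup G v δ) : HomEqv G δ [v] := by
  induction h with
  | nil => exact .refl _
  | cons γ d δ u hγ hd hd5 hδ ih =>
    have hγd := hγ.wconcat hd
    have hγdγ := hγd.wconcat hγ.reverse
    have h₁ : HomEqv G (wconcat (wconcat (wconcat γ d) γ.reverse) δ)
        (wconcat (wconcat γ d) γ.reverse) := by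
      simpa using ih.wconcat_left hγdγ.isWalk (hγdγ.getLast?_eq_head? hδ.isWalkFrom)
    have h₂ : HomEqv G (wconcat γ d) γ := by
      simpa using (homEqv_diamond hd hd5).wconcat_left hγ.isWalk (hγ.getLast?_eq_head? hd)
    exact h₁.trans _ _ _ <| (h₂.wconcat_right hγ.isWalk.reverse
      (hγd.getLast?_eq_head? hγ.reverse)).trans _ _ _ <|
      (pruneEqv_wconcat_reverse hγ.isWalk hγ.head?_eq).homEqv

end Diamonds

section DiamondRel

variable {G : WalkGraph V} {v : V} {α β μ l m : List V}

/-- `α` and `β` lie in the same coset of `D` in the walk group. -/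
def DiamondRel (G : WalkGraph V) (v : V) (α β : List V) : Prop :=
  ∃ δ, InDiamondSubgroup G v δ ∧ PruneEqv G (wconcat α β.reverse) δ

theorem PruneEqv.diamondRel (h : PruneEqv G α β) (hα : IsWalkFrom G v v α)
    (hβ : IsWalkFrom G v v β) : DiamondRel G v α β :=
  ⟨[v], .nil, .trans _ _ _ (h.wconcat_right hβ.isWalk.reverse (hα.getLast?_eq_head? hβ.reverse))
    (pruneEqv_wconcat_reverse hβ.isWalk hβ.head?_eq)⟩

theorem DiamondRel.trans (hα : IsWalkFrom G v v α) (hμ : IsWalkFrom G v v μ)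
    (hβ : IsWalkFrom G v v β) (h₁ : DiamondRel G v α μ) (h₂ : DiamondRel G v μ β) :
    DiamondRel G v α β := by
  obtain ⟨δ₁, hδ₁, h₁⟩ := h₁
  obtain ⟨δ₂, hδ₂, h₂⟩ := h₂
  have hμβ := hμ.wconcat hβ.reverse
  have hcancel : PruneEqv G (wconcat (wconcat α μ.reverse) (wconcat μ β.reverse))
      (wconcat α β.reverse) :=
    pruneEqv_wconcat_cancel hα.isWalk hμ.isWalk hβ.isWalk.reverse
      (hα.getLast?_eq.trans hμ.getLast?_eq.symm) (hμ.getLast?_eq_head? hβ.reverse)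
  refine ⟨wconcat δ₁ δ₂, hδ₁.mul hδ₂, hcancel.symm.trans _ _ _ <| .trans _ _ _
    (h₁.wconcat_right hμβ.isWalk ((hα.wconcat hμ.reverse).getLast?_eq_head? hμβ)) ?_⟩
  exact h₂.wconcat_left hδ₁.isWalkFrom.isWalk (hδ₁.isWalkFrom.getLast?_eq_head? hμβ)

theorem SpiderStep.exists_eq (h : SpiderStep G l m) :
    ∃ p a x y b s, l = p ++ [a] ++ x :: b :: s ∧ m = p ++ [a] ++ y :: b :: s := by
  obtain ⟨-, -, hlen, i, hi0, hi, hag⟩ := h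
  obtain ⟨p, s, x, y, rfl, rfl, rfl⟩ :=
    List.exists_eq_append_cons_of_getElem?_eq hlen (by omega) hag
  have hp : p ≠ [] := by rintro rfl; simp at hi0
  obtain ⟨b, s, rfl⟩ := List.exists_cons_of_ne_nil (show s ≠ [] by rintro rfl; simp at hi)
  exact ⟨p.dropLast, p.getLast hp, x, y, b, s, by rw [List.dropLast_append_getLast hp],
    by rw [List.dropLast_append_getLast hp]⟩

theorem SpiderStep.diamondRel (h : SpiderStep G l m) (hl : IsWalkFrom G v v l)
    (hm : IsWalkFrom G v v m) : DiamondRel G v l m := by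
  obtain ⟨p, a, x, y, b, s, rfl, rfl⟩ := h.exists_eq
  have hlw := (isWalk_iff.1 hl.isWalk).2
  have hmw := (isWalk_iff.1 hm.isWalk).2
  simp only [List.append_assoc, List.singleton_append, List.isChain_append_cons_cons,
    List.isChain_cons_cons] at hlw hmw
  obtain ⟨hpa, hax, hxb, -⟩ := hlw
  obtain ⟨-, hay, hyb, -⟩ := hmw
  have hγ : IsWalkFrom G v a (p ++ [a]) := by
    refine ⟨hpa, ?_, by simp⟩
    simpa [List.head?_append] using hl.head?_eq
  have hd : IsWalkFrom G a a [a, x, b, y, a] :=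
    isWalkFrom_iff.2 ⟨isWalk_iff.2 ⟨List.cons_ne_nil _ _,
      by simp [hax, hxb, G.symm hyb, G.symm hay]⟩, rfl, rfl⟩
  have hδ := InDiamondSubgroup.cons (p ++ [a]) _ [v] a hγ hd rfl .nil
  rw [wconcat_singleton] at hδ
  -- `l * m⁻¹ = p a x (b s s⁻¹ b) y a p⁻¹`, and the backtrack `b s s⁻¹ b` prunes to `b`
  refine ⟨_, hδ, .of_reflTransGen (hl.wconcat hm.reverse).isWalk ?_⟩
  have e₁ : wconcat (p ++ [a] ++ x :: b :: s) (p ++ [a] ++ y :: b :: s).reverse =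
      p ++ [a, x] ++ wconcat (b :: s) (b :: s).reverse ++ y :: a :: p.reverse := by
    rw [wconcat, wconcat, show (p ++ [a] ++ y :: b :: s).reverse =
      s.reverse ++ b :: y :: a :: p.reverse by simp, List.tail_append_cons]
    simp
  have e₂ : wconcat (wconcat (p ++ [a]) [a, x, b, y, a]) (p ++ [a]).reverse =
      p ++ [a, x] ++ b :: y :: a :: p.reverse := by
    simp [wconcat]
  rw [e₁, e₂]
  exact reflTransGen_pruneOf_wconcat_reverse _ _ rfl

-- The relation is carried together with its converse, which makes the symmetry case free.
theorem HomEqv.diamondRel (h : HomEqv G α β) (hα : IsWalkFrom G v v α) :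
    DiamondRel G v α β := by
  refine (h.induction_of_invariant (r := HomStep G) (P := IsWalkFrom G v v)
    (R := fun α β => DiamondRel G v α β ∧ DiamondRel G v β α) (fun _ _ hs => hs.isWalkFrom_iff)
    ?_ ?_ (fun _ _ _ _ h => h.symm) ?_ hα).1
  · intro α β hs hα
    have hβ := hs.isWalkFrom_iff.1 hα
    rcases hs with hs | hs
    · exact ⟨PruneEqv.diamondRel (.rel _ _ hs) hα hβ,
        PruneEqv.diamondRel (.symm _ _ (.rel _ _ hs)) hβ hα⟩
    · exact ⟨hs.diamondRel hα hβ, hs.symm.diamondRel hβ hα⟩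
  · intro α hα
    have h := PruneEqv.diamondRel (.refl _) hα hα
    exact ⟨h, h⟩
  · intro α μ β hα hμ hβ h₁ h₂
    exact ⟨h₁.1.trans hα hμ hβ h₂.1, h₂.2.trans hβ hμ hα h₁.2⟩

theorem HomEqv.of_diamondRel (hα : IsWalkFrom G v v α) (hβ : IsWalkFrom G v v β)
    (h : DiamondRel G v α β) : HomEqv G α β := by
  obtain ⟨δ, hδ, hαβ⟩ := h
  have hαβ' := hα.wconcat hβ.reverse
  have hv : IsWalkFrom G v v [v] := InDiamondSubgroup.nil.isWalkFrom
  have hcancel : PruneEqv G (wconcat (wconcat α β.reverse) β) α := by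
    simpa using pruneEqv_wconcat_cancel hα.isWalk hβ.isWalk hv.isWalk
      (hα.getLast?_eq.trans hβ.getLast?_eq.symm) (hβ.getLast?_eq_head? hv)
  have htriv : HomEqv G (wconcat (wconcat α β.reverse) β) β := by
    simpa [singleton_wconcat hβ.head?_eq] using
      HomEqv.wconcat_right (hαβ.homEqv.trans _ _ _ hδ.homEqv) hβ.isWalk
        (hαβ'.getLast?_eq_head? hβ)
  exact hcancel.homEqv.symm.trans _ _ _ htriv

end DiamondRel

theorem stmt13_general (G : WalkGraph V) (v : V) :
    ∀ α β : List V, IsWalkFrom G v v α → IsWalkFrom G v v β →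
      (HomEqv G α β ↔
        ∃ δ : List V, InDiamondSubgroup G v δ ∧ PruneEqv G (wconcat α β.reverse) δ) :=
  fun _ _ hα hβ => ⟨fun h => h.diamondRel hα, HomEqv.of_diamondRel hα hβ⟩

/-- for a connected graph `G`, the quotient map from the walk group at
`v` to the fundamental group `Π₁(G,v)` (both with concatenation; it is a surjective
homomorphism since both consist of classes of the same closed walks) has kernel the
normal subgroup `D` generated by conjugated diamonds: two closed walks are homotopic
rel endpoints iff `α * β⁻¹` lies in `D` up to prune equivalence. Hence
`Π₁(G,v) ≅ 𝔚ᵥ(G)/D`. -/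
theorem stmt13 (G : WalkGraph V) (v : V)
    (hconn : ∀ u w : V, ∃ l : List V, IsWalkFrom G u w l) :
    ∀ α β : List V, IsWalkFrom G v v α → IsWalkFrom G v v β →
      (HomEqv G α β ↔
        ∃ δ : List V, InDiamondSubgroup G v δ ∧ PruneEqv G (wconcat α β.reverse) δ) :=
  stmt13_general G v
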